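/- arXiv:2410.18880 — 2 statements merged into one kernel-verified Lean document; each statement's English description precedes it below -/
import Mathlib

section
/- Let X = (X₁, …, Xₙ) be a random vector in ℝⁿ whose coordinates Xᵢ are independent random variables, each with a symmetric distribution. Let θ = (θ₁, …, θₙ) be a random vector taking values in {−1, 1}ⁿ whose value is a measurable function of the vector of absolute values (|X₁|, …, |Xₙ|). Then the random vector (θ₁X₁, …, θₙXₙ) has the same distribution as X. -/
/-!
By independence the law of `X` is the product of its marginals, and since these are symmetric,
multiplying coordinatewise by a fixed sign vector `s` preserves it. Such a multiplication also
leaves `|X|`, hence the event `{g |X| = s}`, unchanged. On that event `θ X = s X`, so the law of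
`θ X` agrees with that of `X` on each of the finitely many events `{g |X| = s}`, which cover the
sample space.
-/

open MeasureTheory ProbabilityTheory

namespace MeasureTheory

variable {α β : Type*} [MeasurableSpace α] [MeasurableSpace β] [MeasurableSingletonClass β]
  {μ : Measure α} {f : α → β} {S : Set β}

theorem measure_eq_tsum_measure_inter_fiber (hf : Measurable f) (hS : S.Countable)
    (hfS : ∀ᵐ x ∂μ, f x ∈ S) (s : Set α) :
    μ s = ∑' b : S, μ (s ∩ f ⁻¹' {↑b}) := by
  have hfiber (b : β) : MeasurableSet (f ⁻¹' {b}) := hf (measurableSet_singleton b)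
  calc μ s = μ.restrict s (f ⁻¹' S) := by
        rw [Measure.restrict_apply (hf hS.measurableSet),
          Measure.measure_inter_eq_of_ae (t := f ⁻¹' S) hfS]
    _ = ∑' b : S, μ.restrict s (f ⁻¹' {↑b}) :=
        (tsum_measure_preimage_singleton hS fun b _ => hfiber b).symm
    _ = ∑' b : S, μ (s ∩ f ⁻¹' {↑b}) := by
        simp only [Measure.restrict_apply (hfiber _), Set.inter_comm]

theorem map_eq_self_of_measurePreserving_on_fibers (hf : Measurable f) (hS : S.Countable)
    (hfS : ∀ᵐ x ∂μ, f x ∈ S) {T : β → α → α} (hT : ∀ b ∈ S, MeasurePreserving (T b) μ μ)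
    (hfT : ∀ b ∈ S, ∀ x, f (T b x) = f x) (hTf : Measurable fun x => T (f x) x) :
    μ.map (fun x => T (f x) x) = μ := by
  ext A hA
  have hfiber (b : β) : MeasurableSet (f ⁻¹' {b}) := hf (measurableSet_singleton b)
  have hpreimage (b : S) :
      (fun x => T (f x) x) ⁻¹' A ∩ f ⁻¹' {↑b} = T b ⁻¹' (A ∩ f ⁻¹' {↑b}) := by
    ext x
    simp only [Set.mem_inter_iff, Set.mem_preimage, Set.mem_singleton_iff, hfT b b.2]
    constructor <;> rintro ⟨hx, hfx⟩ <;> exact ⟨hfx ▸ hx, hfx⟩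
  rw [Measure.map_apply hTf hA, measure_eq_tsum_measure_inter_fiber hf hS hfS,
    measure_eq_tsum_measure_inter_fiber hf hS hfS A]
  refine tsum_congr fun b => ?_
  rw [hpreimage, (hT b b.2).measure_preimage (hA.inter (hfiber b)).nullMeasurableSet]

end MeasureTheory

section SignFlip

variable {ι : Type*} [Fintype ι] {ν : ι → Measure ℝ} [∀ i, SigmaFinite (ν i)]

theorem measurePreserving_mul_pi_of_map_neg_eq (hν : ∀ i, (ν i).map Neg.neg = ν i)
    {s : ι → ℝ} (hs : ∀ i, s i = 1 ∨ s i = -1) :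
    MeasurePreserving (s * ·) (Measure.pi ν) (Measure.pi ν) := by
  refine measurePreserving_pi ν ν (f := fun i x => s i * x) fun i => ?_
  rcases hs i with h | h
  · simpa only [h, one_mul] using .id (ν i)
  · simpa only [h, neg_one_mul] using
      (⟨measurable_neg, hν i⟩ : MeasurePreserving (Neg.neg : ℝ → ℝ) _ _)

theorem map_fun_abs_mul_pi_eq_pi_of_map_neg_eq (hν : ∀ i, (ν i).map Neg.neg = ν i)
    {g : (ι → ℝ) → ι → ℝ} (hg : Measurable g)
    (hg_sign : ∀ᵐ x ∂Measure.pi ν, ∀ i, g (fun j => |x j|) i = 1 ∨ g (fun j => |x j|) i = -1) :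
    (Measure.pi ν).map (fun x => g (fun j => |x j|) * x) = Measure.pi ν := by
  have hsigns : (Set.univ.pi fun _ : ι => ({1, -1} : Set ℝ)).Countable :=
    (Set.Finite.pi fun _ => Set.toFinite _).countable
  have hg_abs : Measurable fun x : ι → ℝ => g fun j => |x j| := hg.comp (by fun_prop)
  refine map_eq_self_of_measurePreserving_on_fibers hg_abs hsigns
    (hg_sign.mono fun x hx i _ => hx i)
    (fun s hs => measurePreserving_mul_pi_of_map_neg_eq hν fun i => hs i trivial)
    (fun s hs x => congrArg g (funext fun j => ?_)) (hg_abs.mul measurable_id)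
  obtain h | h : s j = 1 ∨ s j = -1 := hs j trivial <;> simp [h]

end SignFlip

theorem sign_flipping {n : ℕ} {Ω : Type*} [MeasurableSpace Ω]
    (P : Measure Ω) [IsProbabilityMeasure P]
    (X : Ω → Fin n → ℝ) (hX : Measurable X)
    (hindep : iIndepFun (fun i ω => X ω i) P)
    (hsymm : ∀ i : Fin n, P.map (fun ω => X ω i) = P.map (fun ω => -X ω i))
    (θ : Ω → Fin n → ℝ) (hθval : ∀ ω i, θ ω i = 1 ∨ θ ω i = -1)
    (g : (Fin n → ℝ) → (Fin n → ℝ)) (hg : Measurable g)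
    (hθ : ∀ ω, θ ω = g (fun i => |X ω i|)) :
    P.map (fun ω i => θ ω i * X ω i) = P.map X := by
  have hXi (i : Fin n) : Measurable fun ω => X ω i := (measurable_pi_apply i).comp hX
  have (i : Fin n) : IsProbabilityMeasure (P.map fun ω => X ω i) :=
    Measure.isProbabilityMeasure_map (hXi i).aemeasurable
  have hlaw : P.map X = Measure.pi fun i => P.map fun ω => X ω i :=
    hindep.map_fun_eq_pi_map fun i => (hXi i).aemeasurable
  have hmarginal_symm (i : Fin n) :
      (P.map fun ω => X ω i).map Neg.neg = P.map fun ω => X ω i := by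
    rw [Measure.map_map measurable_neg (hXi i)]
    exact (hsymm i).symm
  have hg_sign : ∀ᵐ x ∂P.map X, ∀ i, g (fun j => |x j|) i = 1 ∨ g (fun j => |x j|) i = -1 := by
    rw [ae_map_iff hX.aemeasurable (by measurability)]
    exact .of_forall fun ω => hθ ω ▸ hθval ω
  have hflip : Measurable fun x : Fin n → ℝ => g (fun j => |x j|) * x :=
    (hg.comp (by fun_prop)).mul measurable_id
  have hcomp : (fun ω i => θ ω i * X ω i) = (fun x => g (fun j => |x j|) * x) ∘ X := by
    funext ω
    rw [Function.comp_apply, ← hθ]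
    rfl
  rw [hcomp, ← Measure.map_map hflip hX, hlaw]
  exact map_fun_abs_mul_pi_eq_pi_of_map_neg_eq hmarginal_symm hg (hlaw ▸ hg_sign)
end

section
/- Let T ⊆ ℝⁿ be a nonempty highly symmetric set, let S = { supp(x) : x ∈ T } be the family of supports of points of T, and for each I ∈ S let ν(I) = min{ ‖x‖₂ : x ∈ T, supp(x) = I } (assume this minimum exists for each I ∈ S). Then: (i) T = { x ∈ ℝⁿ : ∃ I ∈ S with supp(x) = I and ‖x‖₂ ≥ ν(I) }; (ii) the scaled Gaussian width satisfies w̄(T) = E max_{I∈S} ‖X_I‖₂/ν(I), where X is a standard Gaussian random vector in ℝⁿ and X_I denotes the restriction of X to the coordinates in I; and (iii) the inradius satisfies ρ(T) = min_{I∈S} ν(I). -/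
open MeasureTheory ProbabilityTheory Real Set Pointwise
open scoped RealInnerProductSpace

/-- The standard Gaussian measure on `EuclideanSpace ℝ (Fin n)`. -/
noncomputable def stdGaussian (n : ℕ) : Measure (EuclideanSpace ℝ (Fin n)) :=
  (Measure.pi fun _ : Fin n => gaussianReal 0 1).map
    (MeasurableEquiv.toLp 2 (Fin n → ℝ))

/-- The scaled Gaussian width `w̄(T) = E sup_{t ∈ T} ⟪X, t / ‖t‖₂²⟫`. -/
noncomputable def scaledWidth {n : ℕ} (T : Set (EuclideanSpace ℝ (Fin n))) : ℝ :=
  ∫ x, (⨆ t : T, ⟪x, (‖(t : EuclideanSpace ℝ (Fin n))‖ ^ 2)⁻¹ •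
    (t : EuclideanSpace ℝ (Fin n))⟫) ∂(stdGaussian n)

/-- The inradius `ρ(T) = inf_{t ∈ T} ‖t‖₂`. -/
noncomputable def inradius {n : ℕ} (T : Set (EuclideanSpace ℝ (Fin n))) : ℝ :=
  ⨅ t : T, ‖(t : EuclideanSpace ℝ (Fin n))‖

/-- A set `T` is highly symmetric if whenever `x ∈ T` and `y` has the same support as `x`
and at least as large a norm, then `y ∈ T`. -/
def HighlySymmetric {n : ℕ} (T : Set (EuclideanSpace ℝ (Fin n))) : Prop :=
  ∀ x ∈ T, ∀ y : EuclideanSpace ℝ (Fin n),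
    {i : Fin n | y i ≠ 0} = {i : Fin n | x i ≠ 0} → ‖x‖ ≤ ‖y‖ → y ∈ T

/-! For `t` with support `I`, Cauchy–Schwarz gives `⟪X, t / ‖t‖²⟫ = ⟪X_I, t⟫ / ‖t‖² ≤ ‖X_I‖ / ‖t‖`,
and `‖t‖ ≥ ν(I)` on `T`. When `X` has no zero coordinate (almost surely), `X_I` has support `I`, so
`t = ν(I) X_I / ‖X_I‖` lies in `T` by high symmetry and attains `‖X_I‖ / ν(I)`. Hence the supremum
over `T` is the maximum over the finitely many supports. -/

theorem ciSup_eq_ciSup_of_forall_exists_le {α : Type*} [ConditionallyCompleteLattice α]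
    {ι κ : Sort*} {f : ι → α} {g : κ → α} (hg : BddAbove (range g))
    (hfg : ∀ i, ∃ k, f i ≤ g k) (hgf : ∀ k, ∃ i, g k ≤ f i) : ⨆ i, f i = ⨆ k, g k := by
  have hf : BddAbove (range f) := by
    obtain ⟨b, hb⟩ := hg
    exact ⟨b, forall_mem_range.2 fun i => (hfg i).elim fun k hk => hk.trans (hb (mem_range_self k))⟩
  rcases isEmpty_or_nonempty ι with hι | hι
  · have : IsEmpty κ := ⟨fun k => (hgf k).elim fun i _ => hι.false i⟩
    simp only [iSup, range_eq_empty]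
  · have : Nonempty κ := hι.elim fun i => (hfg i).elim fun k _ => ⟨k⟩
    exact le_antisymm (ciSup_mono_of_forall_exists hg hfg) (ciSup_mono_of_forall_exists hf hgf)

theorem ciInf_eq_ciInf_of_forall_exists_le {α : Type*} [ConditionallyCompleteLattice α]
    {ι κ : Sort*} {f : ι → α} {g : κ → α} (hg : BddBelow (range g))
    (hfg : ∀ i, ∃ k, g k ≤ f i) (hgf : ∀ k, ∃ i, f i ≤ g k) : ⨅ i, f i = ⨅ k, g k :=
  ciSup_eq_ciSup_of_forall_exists_le (α := αᵒᵈ) hg hfg hgf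

theorem ae_stdGaussian_ne_zero (n : ℕ) : ∀ᵐ x ∂stdGaussian n, ∀ i, x i ≠ 0 := by
  have := nullSingletonClass_gaussianReal (μ := 0) one_ne_zero
  rw [_root_.stdGaussian, (MeasurableEquiv.toLp 2 (Fin n → ℝ)).measurableEmbedding.ae_map_iff,
    ae_all_iff]
  exact fun i => Measure.ae_eval_ne _ i 0

namespace EuclideanSpace

variable {ι : Type*}

theorem support_eq_empty_iff {x : EuclideanSpace ℝ ι} : {i | x i ≠ 0} = ∅ ↔ x = 0 := by
  simp [eq_empty_iff_forall_notMem, PiLp.ext_iff]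

theorem support_smul {c : ℝ} (hc : c ≠ 0) (x : EuclideanSpace ℝ ι) :
    {i | (c • x) i ≠ 0} = {i | x i ≠ 0} := by
  simp [hc]

/-- `restrictCoords I x` is the paper's `x_I`, padded with zeros outside `I`. -/
noncomputable def restrictCoords (I : Set ι) (x : EuclideanSpace ℝ ι) : EuclideanSpace ℝ ι :=
  WithLp.toLp 2 (I.indicator x)

@[simp] theorem restrictCoords_apply (I : Set ι) (x : EuclideanSpace ℝ ι) (i : ι) :
    restrictCoords I x i = I.indicator x i := rfl

theorem support_restrictCoords {x : EuclideanSpace ℝ ι} (hx : ∀ i, x i ≠ 0) (I : Set ι) :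
    {i | restrictCoords I x i ≠ 0} = I := by
  ext i
  by_cases hi : i ∈ I <;> simp [hi, hx i]

variable [Fintype ι]

theorem norm_restrictCoords (I : Set ι) (x : EuclideanSpace ℝ ι) :
    ‖restrictCoords I x‖ = √(∑ i, I.indicator (fun j => x j ^ 2) i) := by
  rw [EuclideanSpace.norm_eq]
  congr 1
  refine Finset.sum_congr rfl fun i _ => ?_
  by_cases hi : i ∈ I <;> simp [hi]

theorem inner_restrictCoords_support (x t : EuclideanSpace ℝ ι) :
    ⟪restrictCoords {i | t i ≠ 0} x, t⟫ = ⟪x, t⟫ := by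
  simp only [PiLp.inner_apply, RCLike.inner_apply, conj_trivial]
  refine Finset.sum_congr rfl fun i _ => ?_
  by_cases hi : t i = 0 <;> simp [hi]

theorem inner_restrictCoords_self (I : Set ι) (x : EuclideanSpace ℝ ι) :
    ⟪x, restrictCoords I x⟫ = ‖restrictCoords I x‖ ^ 2 := by
  rw [← real_inner_self_eq_norm_sq]
  simp only [PiLp.inner_apply, RCLike.inner_apply, conj_trivial]
  refine Finset.sum_congr rfl fun i _ => ?_
  by_cases hi : i ∈ I <;> simp [hi]

theorem inner_inv_norm_sq_smul_le (x t : EuclideanSpace ℝ ι) :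
    ⟪x, (‖t‖ ^ 2)⁻¹ • t⟫ ≤ ‖restrictCoords {i | t i ≠ 0} x‖ / ‖t‖ := by
  rcases eq_or_ne t 0 with rfl | ht
  · simp
  have := norm_pos_iff.2 ht
  calc ⟪x, (‖t‖ ^ 2)⁻¹ • t⟫ = (‖t‖ ^ 2)⁻¹ * ⟪restrictCoords {i | t i ≠ 0} x, t⟫ := by
        rw [real_inner_smul_right, inner_restrictCoords_support]
    _ ≤ (‖t‖ ^ 2)⁻¹ * (‖restrictCoords {i | t i ≠ 0} x‖ * ‖t‖) := by
        gcongr; exact real_inner_le_norm _ _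
    _ = ‖restrictCoords {i | t i ≠ 0} x‖ / ‖t‖ := by field_simp

theorem inner_inv_norm_sq_smul_le_of_support_eq {x y t : EuclideanSpace ℝ ι}
    (hyt : {i | y i ≠ 0} = {i | t i ≠ 0}) (hnorm : ‖y‖ ≤ ‖t‖) :
    ⟪x, (‖t‖ ^ 2)⁻¹ • t⟫ ≤ ‖restrictCoords {i | t i ≠ 0} x‖ / ‖y‖ := by
  rcases eq_or_ne y 0 with rfl | hy
  · obtain rfl : t = 0 := support_eq_empty_iff.1 (hyt.symm.trans (support_eq_empty_iff.2 rfl))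
    simp
  have := norm_pos_iff.2 hy
  calc ⟪x, (‖t‖ ^ 2)⁻¹ • t⟫ ≤ ‖restrictCoords {i | t i ≠ 0} x‖ / ‖t‖ :=
        inner_inv_norm_sq_smul_le x t
    _ ≤ ‖restrictCoords {i | t i ≠ 0} x‖ / ‖y‖ := by gcongr

theorem exists_support_eq_norm_eq_inner_eq {x : EuclideanSpace ℝ ι} (hx : ∀ i, x i ≠ 0)
    (y : EuclideanSpace ℝ ι) : ∃ t : EuclideanSpace ℝ ι, {i | t i ≠ 0} = {i | y i ≠ 0} ∧
      ‖t‖ = ‖y‖ ∧ ⟪x, (‖t‖ ^ 2)⁻¹ • t⟫ = ‖restrictCoords {i | y i ≠ 0} x‖ / ‖y‖ := by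
  rcases eq_or_ne y 0 with rfl | hy
  · exact ⟨0, rfl, rfl, by simp⟩
  set xI := restrictCoords {i | y i ≠ 0} x with hxI_def
  have hxI : xI ≠ 0 := by
    rwa [Ne, ← support_eq_empty_iff, support_restrictCoords hx, support_eq_empty_iff]
  have hy' := norm_pos_iff.2 hy
  have hxI' := norm_pos_iff.2 hxI
  refine ⟨(‖y‖ / ‖xI‖) • xI, ?_, ?_, ?_⟩
  · rw [support_smul (by positivity), support_restrictCoords hx]
  · rw [norm_smul, norm_div, norm_norm, norm_norm]
    field_simp
  · rw [norm_smul, norm_div, norm_norm, norm_norm, real_inner_smul_right, real_inner_smul_right,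
      inner_restrictCoords_self, ← hxI_def]
    field_simp

end EuclideanSpace

open EuclideanSpace

theorem HighlySymmetric.exists_mem_inner_eq {n : ℕ} {T : Set (EuclideanSpace ℝ (Fin n))}
    (hT : HighlySymmetric T) {x y : EuclideanSpace ℝ (Fin n)} (hx : ∀ i, x i ≠ 0) (hy : y ∈ T) :
    ∃ t ∈ T, ⟪x, (‖t‖ ^ 2)⁻¹ • t⟫ = ‖restrictCoords {i | y i ≠ 0} x‖ / ‖y‖ := by
  obtain ⟨t, hsupp, hnorm, hinner⟩ := exists_support_eq_norm_eq_inner_eq hx y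
  exact ⟨t, hT y hy t hsupp hnorm.ge, hinner⟩

theorem highly_symmetric_structure_general {n : ℕ}
    (T : Set (EuclideanSpace ℝ (Fin n))) (hsym : HighlySymmetric T)
    (𝒮 : Set (Set (Fin n))) (h𝒮 : 𝒮 = {I | ∃ x ∈ T, {i : Fin n | x i ≠ 0} = I})
    (ν : Set (Fin n) → ℝ)
    (hν : ∀ I ∈ 𝒮, (∃ x ∈ T, {i : Fin n | x i ≠ 0} = I ∧ ‖x‖ = ν I) ∧
      ∀ x ∈ T, {i : Fin n | x i ≠ 0} = I → ν I ≤ ‖x‖) :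
    T = {x | ∃ I ∈ 𝒮, {i : Fin n | x i ≠ 0} = I ∧ ν I ≤ ‖x‖} ∧
    scaledWidth T = ∫ x, (⨆ I : 𝒮,
      Real.sqrt (∑ i, Set.indicator (I : Set (Fin n)) (fun j => x j ^ 2) i) /
        ν (I : Set (Fin n))) ∂(stdGaussian n) ∧
    inradius T = ⨅ I : 𝒮, ν (I : Set (Fin n)) := by
  have hsupp_mem : ∀ t ∈ T, {i | t i ≠ 0} ∈ 𝒮 := fun t ht => h𝒮 ▸ ⟨t, ht, rfl⟩
  have hν_le : ∀ t ∈ T, ν {i | t i ≠ 0} ≤ ‖t‖ := fun t ht => (hν _ (hsupp_mem t ht)).2 t ht rfl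
  refine ⟨?_, ?_, ?_⟩
  · ext x
    refine ⟨fun hx => ⟨_, hsupp_mem x hx, rfl, hν_le x hx⟩, ?_⟩
    rintro ⟨I, hI, rfl, hle⟩
    obtain ⟨y, hyT, hy, hyν⟩ := (hν _ hI).1
    exact hsym y hyT x hy.symm (hyν ▸ hle)
  · refine integral_congr_ae ((ae_stdGaussian_ne_zero n).mono fun x hx => ?_)
    simp only [← norm_restrictCoords]
    refine ciSup_eq_ciSup_of_forall_exists_le (finite_range _).bddAbove
      (fun t => ⟨⟨_, hsupp_mem t t.2⟩, ?_⟩) (fun I => ?_)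
    · obtain ⟨y, -, hy, hyν⟩ := (hν _ (hsupp_mem t t.2)).1
      rw [← hyν]
      exact inner_inv_norm_sq_smul_le_of_support_eq hy (hyν ▸ hν_le t t.2)
    · obtain ⟨y, hyT, hy, hyν⟩ := (hν _ I.2).1
      obtain ⟨t, htT, ht⟩ := hsym.exists_mem_inner_eq hx hyT
      exact ⟨⟨t, htT⟩, (ht.trans (by rw [hy, hyν])).ge⟩
  · refine ciInf_eq_ciInf_of_forall_exists_le (finite_range _).bddBelow
      (fun t => ⟨⟨_, hsupp_mem t t.2⟩, hν_le t t.2⟩) (fun I => ?_)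
    obtain ⟨y, hyT, -, hyν⟩ := (hν _ I.2).1
    exact ⟨⟨y, hyT⟩, hyν.le⟩

theorem highly_symmetric_structure {n : ℕ}
    (T : Set (EuclideanSpace ℝ (Fin n))) (hT : T.Nonempty) (hsym : HighlySymmetric T)
    (𝒮 : Set (Set (Fin n))) (h𝒮 : 𝒮 = {I | ∃ x ∈ T, {i : Fin n | x i ≠ 0} = I})
    (ν : Set (Fin n) → ℝ)
    (hν : ∀ I ∈ 𝒮, (∃ x ∈ T, {i : Fin n | x i ≠ 0} = I ∧ ‖x‖ = ν I) ∧
      ∀ x ∈ T, {i : Fin n | x i ≠ 0} = I → ν I ≤ ‖x‖) :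
    T = {x | ∃ I ∈ 𝒮, {i : Fin n | x i ≠ 0} = I ∧ ν I ≤ ‖x‖} ∧
    scaledWidth T = ∫ x, (⨆ I : 𝒮,
      Real.sqrt (∑ i, Set.indicator (I : Set (Fin n)) (fun j => x j ^ 2) i) /
        ν (I : Set (Fin n))) ∂(stdGaussian n) ∧
    inradius T = ⨅ I : 𝒮, ν (I : Set (Fin n)) :=
  highly_symmetric_structure_general T hsym 𝒮 h𝒮 ν hν
end
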